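/- arXiv:1012.0623 — 2 statements merged into one kernel-verified Lean document; each statement's English description precedes it below -/
import Mathlib

section
/- Every invariant convex set S ⊆ Sⁿ that is closed can be represented as an intersection of sublevel sets of elementary convex graph invariants: S = ⋂_{P ∈ 𝒫} {A ∈ Sⁿ : Θ_P(A) ≤ α_P} for some 𝒫 ⊆ Sⁿ and reals α_P. -/
/-
A closed convex set is cut out by the closed half-spaces containing it, and every linear
functional on matrices is `X ↦ tr (P X)`. If `tr (P ·) ≤ u` on a permutation-invariant `S`,
then `Θ_P ≤ u` on `S` as well, while `tr (P A) ≤ Θ_P(A)` for every `A`. Hence any `A ∉ S`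
separated from `S` by a half-space `tr (P ·) ≤ u` is also separated by the sublevel set
`Θ_P ≤ u`, and `α_P = sup_S Θ_P`, over all `P` for which this is finite, does the job.
-/

open Matrix

noncomputable def permConj {n : ℕ} (σ : Equiv.Perm (Fin n))
    (A : Matrix (Fin n) (Fin n) ℝ) : Matrix (Fin n) (Fin n) ℝ :=
  (σ.permMatrix ℝ) * A * (σ.permMatrix ℝ)ᵀ

/-- The elementary convex graph invariant `Θ_P(A) = max_Π tr(P Π A Πᵀ)`. -/
noncomputable def theta {n : ℕ} (P A : Matrix (Fin n) (Fin n) ℝ) : ℝ :=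
  (Finset.univ : Finset (Equiv.Perm (Fin n))).sup' Finset.univ_nonempty
    (fun σ => (P * permConj σ A).trace)

instance Matrix.locallyConvexSpace {m n 𝕜 E : Type*} [Semiring 𝕜] [PartialOrder 𝕜]
    [AddCommMonoid E] [TopologicalSpace E] [Module 𝕜 E] [LocallyConvexSpace 𝕜 E] :
    LocallyConvexSpace 𝕜 (Matrix m n E) :=
  Pi.locallyConvexSpace

theorem Matrix.exists_trace_mul_eq {m R : Type*} [Fintype m] [DecidableEq m] [CommSemiring R]
    (f : Matrix m m R →ₗ[R] R) : ∃ P : Matrix m m R, ∀ X, (P * X).trace = f X := by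
  suffices h : traceLinearMap m R R ∘ₗ LinearMap.mulLeft R (of fun i j => f (single j i 1)) = f from
    ⟨_, LinearMap.congr_fun h⟩
  refine ext_linearMap R fun i j => LinearMap.ext fun a => ?_
  simp only [LinearMap.comp_apply, singleLinearMap_apply, LinearMap.mulLeft_apply,
    traceLinearMap_apply, trace_mul_single, of_apply, MulOpposite.smul_eq_mul_unop]
  rw [MulOpposite.unop_op, mul_comm, ← smul_eq_mul, ← map_smul, smul_single, smul_eq_mul, mul_one]

section theta

variable {n : ℕ}

@[simp]
theorem permConj_one (A : Matrix (Fin n) (Fin n) ℝ) : permConj 1 A = A := by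
  simp [permConj]

theorem theta_le_iff {P A : Matrix (Fin n) (Fin n) ℝ} {c : ℝ} :
    theta P A ≤ c ↔ ∀ σ : Equiv.Perm (Fin n), (P * permConj σ A).trace ≤ c := by
  simp [theta]

theorem trace_mul_le_theta (P A : Matrix (Fin n) (Fin n) ℝ) : (P * A).trace ≤ theta P A := by
  simpa using theta_le_iff.mp le_rfl 1

@[simp]
theorem theta_zero_left (A : Matrix (Fin n) (Fin n) ℝ) : theta 0 A = 0 := by
  simp [theta]

end theta

theorem exists_theta_le_lt_theta_of_notMem {n : ℕ} {S : Set (Matrix (Fin n) (Fin n) ℝ)}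
    (hconv : Convex ℝ S) (hclosed : IsClosed S)
    (hinv : ∀ A ∈ S, ∀ σ : Equiv.Perm (Fin n), permConj σ A ∈ S)
    {A : Matrix (Fin n) (Fin n) ℝ} (hA : A ∉ S) :
    ∃ (P : Matrix (Fin n) (Fin n) ℝ) (u : ℝ), (∀ B ∈ S, theta P B ≤ u) ∧ u < theta P A := by
  obtain ⟨f, u, hfS, hfA⟩ := geometric_hahn_banach_closed_point hconv hclosed hA
  obtain ⟨P, hP⟩ := exists_trace_mul_eq (f : Matrix (Fin n) (Fin n) ℝ →L[ℝ] ℝ).toLinearMap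
  refine ⟨P, u, fun B hB => theta_le_iff.mpr fun σ => ?_, hfA.trans_le ?_⟩
  · simpa [hP] using (hfS _ (hinv B hB σ)).le
  · simpa [hP] using trace_mul_le_theta P A

theorem stmt2 (n : ℕ) (S : Set (Matrix (Fin n) (Fin n) ℝ))
    (hsymm : ∀ A ∈ S, A.IsSymm)
    (hconv : Convex ℝ S)
    (hclosed : IsClosed S)
    (hinv : ∀ A ∈ S, ∀ σ : Equiv.Perm (Fin n), permConj σ A ∈ S) :
    ∃ (Ps : Set (Matrix (Fin n) (Fin n) ℝ)) (α : Matrix (Fin n) (Fin n) ℝ → ℝ),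
      S = {A : Matrix (Fin n) (Fin n) ℝ | A.IsSymm} ∩
        ⋂ P ∈ Ps, {A : Matrix (Fin n) (Fin n) ℝ | theta P A ≤ α P} := by
  -- `sSup ∅ = 0`, so the empty set needs its own unsatisfiable constraint.
  rcases S.eq_empty_or_nonempty with rfl | hS
  · exact ⟨{0}, fun _ => -1, by ext; simp⟩
  refine ⟨{P | BddAbove (theta P '' S)}, fun P => sSup (theta P '' S), ?_⟩
  refine Set.Subset.antisymm (fun A hA => ⟨hsymm A hA, ?_⟩) fun A ⟨_, hA⟩ => ?_
  · exact Set.mem_iInter₂.mpr fun P hP => le_csSup hP ⟨A, hA, rfl⟩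
  by_contra hAS
  obtain ⟨P, u, hPS, hPA⟩ := exists_theta_le_lt_theta_of_notMem hconv hclosed hinv hAS
  have hP : ∀ y ∈ theta P '' S, y ≤ u := Set.forall_mem_image.mpr hPS
  have hAP : theta P A ≤ sSup (theta P '' S) := Set.mem_iInter₂.mp hA P ⟨u, hP⟩
  exact hPA.not_ge (hAP.trans (csSup_le (hS.image _) hP))
end

section
/- The extreme points of the set {x ∈ ℝⁿ : x is majorized by d} (the permutahedron of d ∈ ℝⁿ) are exactly the permutations Πd of d, for Π ∈ Sym(n). -/
/-- The entries of `x` sorted in descending order. -/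
noncomputable def sortDesc {n : ℕ} (x : Fin n → ℝ) : Fin n → ℝ :=
  fun i => (x ∘ Tuple.sort x) i.rev

/-- The sum of the `k` largest entries of `x`. -/
noncomputable def topSum {n : ℕ} (k : ℕ) (x : Fin n → ℝ) : ℝ :=
  ∑ i : Fin n, if (i : ℕ) < k then sortDesc x i else 0

/-- `x` is majorized by `d`. -/
def MajorizedBy {n : ℕ} (x d : Fin n → ℝ) : Prop :=
  (∀ k : ℕ, k ≤ n - 1 → topSum k x ≤ topSum k d) ∧ ∑ i, x i = ∑ i, d i

/-!
The set `{x | x ≺ d}` is the polytope cut out by the inequalities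
`∑ i ∈ A, x i ≤ topSum #A d`, one for each `A : Finset (Fin n)`, together with `∑ x = ∑ d`.

A permutation `z = d ∘ σ` makes the `n + 1` nested inequalities for the sets `topSet k z` of its
`k` largest entries tight, and these tight values determine `z`; a segment through `z` inside the
polytope is therefore constant, hence degenerate.

Conversely, if the decreasing rearrangement of `x` is not that of `d`, take a maximal run
`a < k < b` with `topSum k x < topSum k d`. At both ends of the run the sorted entries of `x` drop
strictly, so every tight set `A` either lies inside the top-`a` block or contains the top-`b`
block. Moving mass between the entries of rank `a` and `b - 1` keeps all tight inequalities tight,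
and for a small step it keeps the slack ones valid, so `x` is the midpoint of a segment in the
polytope.
-/

open Finset Filter Topology

section Convex

variable {E : Type*} [AddCommGroup E] [Module ℝ E] {S : Set E}

theorem notMem_extremePoints_of_eventually_add_smul_mem {x v : E} (hv : v ≠ 0)
    (h : ∀ᶠ t in 𝓝 (0 : ℝ), x + t • v ∈ S) : x ∉ S.extremePoints ℝ := by
  intro hx
  obtain ⟨ε, hε, hball⟩ := Metric.eventually_nhds_iff.1 h
  have hmem : ∀ t : ℝ, |t| < ε → x + t • v ∈ S := fun t ht => hball (by simpa using ht)
  have hε2 : |ε / 2| < ε := by rw [abs_of_pos (half_pos hε)]; linarith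
  have hseg : x ∈ openSegment ℝ (x + (ε / 2) • v) (x + (-(ε / 2)) • v) :=
    ⟨1 / 2, 1 / 2, by norm_num, by norm_num, by norm_num, by module⟩
  have := hx.2 (hmem _ hε2) (hmem _ (by rwa [abs_neg])) hseg
  rw [add_eq_left, smul_eq_zero] at this
  exact this.elim (half_pos hε).ne' hv

theorem mem_extremePoints_of_forall_le {ι : Type*} {z : E} (f : ι → E →ₗ[ℝ] ℝ) (hz : z ∈ S)
    (hle : ∀ y ∈ S, ∀ i, f i y ≤ f i z) (hinj : ∀ y, (∀ i, f i y = f i z) → y = z) :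
    z ∈ S.extremePoints ℝ := by
  refine ⟨hz, fun x₁ h₁ x₂ h₂ ⟨a, b, ha, hb, hab, hx⟩ => hinj x₁ fun i => ?_⟩
  have h := congrArg (f i) hx
  rw [map_add, map_smul, map_smul, smul_eq_mul, smul_eq_mul] at h
  have h₁i := hle x₁ h₁ i
  have h₂i := hle x₂ h₂ i
  have hsum : a * f i z + b * f i z = f i z := by rw [← add_mul, hab, one_mul]
  by_contra! hlt
  replace hlt := lt_of_le_of_ne h₁i hlt
  nlinarith [mul_lt_mul_of_pos_left hlt ha, mul_le_mul_of_nonneg_left h₂i hb.le]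

end Convex

theorem Nat.exists_maximal_interval_of_not {P : ℕ → Prop} [DecidablePred P] {n k : ℕ} (h0 : P 0)
    (hn : ∀ j, n ≤ j → P j) (hk : ¬ P k) :
    ∃ a b, a < k ∧ k < b ∧ b ≤ n ∧ P a ∧ P b ∧ ∀ j, a < j → j < b → ¬ P j := by
  have hkn : k < n := by by_contra! h; exact hk (hn k h)
  have hb : ∃ b, k < b ∧ P b := ⟨n, hkn, hn n le_rfl⟩
  have ha : P (Nat.findGreatest P k) := Nat.findGreatest_spec (zero_le k) h0
  have hak : Nat.findGreatest P k < k :=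
    (Nat.findGreatest_le k).lt_of_ne fun h => hk (h ▸ ha)
  refine ⟨_, Nat.find hb, hak, (Nat.find_spec hb).1, Nat.find_min' hb ⟨hkn, hn n le_rfl⟩, ha,
    (Nat.find_spec hb).2, fun j haj hjb hj => ?_⟩
  rcases le_or_gt j k with hjk | hkj
  · exact Nat.findGreatest_is_greatest haj hjk hj
  · exact Nat.find_min hb hjb ⟨hkj, hj⟩

theorem Finset.sum_le_sum_of_card_eq_of_forall_le {ι M : Type*} [DecidableEq ι] [AddCommMonoid M]
    [LinearOrder M] [IsOrderedAddMonoid M] {f : ι → M} {A T : Finset ι} (hcard : #A = #T)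
    (hT : ∀ i ∈ T, ∀ j ∉ T, f j ≤ f i) : ∑ i ∈ A, f i ≤ ∑ i ∈ T, f i := by
  rw [← sum_inter_add_sum_sdiff A T, ← sum_inter_add_sum_sdiff T A, inter_comm]
  refine add_le_add le_rfl ?_
  rcases (T \ A).eq_empty_or_nonempty with h | h
  · rw [card_eq_zero.1 ((card_sdiff_comm hcard).trans (card_eq_zero.2 h)), h]
  · calc ∑ i ∈ A \ T, f i ≤ #(A \ T) • (T \ A).inf' h f :=
          sum_le_card_nsmul _ _ _ fun j hj =>
            le_inf' h f fun i hi => hT i (mem_sdiff.1 hi).1 j (mem_sdiff.1 hj).2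
      _ = #(T \ A) • (T \ A).inf' h f := by rw [card_sdiff_comm hcard]
      _ ≤ ∑ i ∈ T \ A, f i := card_nsmul_le_sum _ _ _ fun i hi => inf'_le f hi

section Majorization

variable {n : ℕ}

noncomputable def sortPerm (x : Fin n → ℝ) : Equiv.Perm (Fin n) :=
  Fin.revPerm.trans (Tuple.sort x)

theorem sortDesc_eq_comp (x : Fin n → ℝ) : sortDesc x = x ∘ sortPerm x := rfl

@[simp]
theorem sortDesc_sortPerm_symm_apply (x : Fin n → ℝ) (i : Fin n) :
    sortDesc x ((sortPerm x).symm i) = x i := by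
  simp [sortDesc_eq_comp]

theorem antitone_sortDesc (x : Fin n → ℝ) : Antitone (sortDesc x) :=
  fun _ _ hij => Tuple.monotone_sort x (Fin.rev_le_rev.2 hij)

theorem sortDesc_comp_perm (x : Fin n → ℝ) (σ : Equiv.Perm (Fin n)) :
    sortDesc (x ∘ σ) = sortDesc x :=
  funext fun i => congrFun (Tuple.comp_perm_comp_sort_eq_comp_sort (f := x) (σ := σ)) i.rev

theorem exists_perm_of_sortDesc_eq {x d : Fin n → ℝ} (h : sortDesc x = sortDesc d) :
    ∃ σ : Equiv.Perm (Fin n), x = d ∘ σ := by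
  refine ⟨(sortPerm x).symm.trans (sortPerm d), funext fun i => ?_⟩
  rw [← sortDesc_sortPerm_symm_apply x i, h, sortDesc_eq_comp]
  rfl

theorem topSum_comp_perm (k : ℕ) (x : Fin n → ℝ) (σ : Equiv.Perm (Fin n)) :
    topSum k (x ∘ σ) = topSum k x := by
  simp only [topSum, sortDesc_comp_perm]

@[simp]
theorem topSum_zero (x : Fin n → ℝ) : topSum 0 x = 0 := by
  simp [topSum]

theorem topSum_of_le {k : ℕ} (hk : n ≤ k) (x : Fin n → ℝ) : topSum k x = ∑ i, x i := by
  simp only [topSum, sortDesc_eq_comp]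
  rw [← Equiv.sum_comp (sortPerm x) x]
  exact sum_congr rfl fun i _ => if_pos (i.2.trans_le hk)

theorem topSum_succ (x : Fin n → ℝ) (i : Fin n) :
    topSum (i + 1) x = topSum i x + sortDesc x i := by
  have hi : sortDesc x i = ∑ j, if j = i then sortDesc x j else 0 := by simp
  rw [topSum, topSum, hi, ← sum_add_distrib]
  refine sum_congr rfl fun j _ => ?_
  split_ifs <;> simp_all [Fin.ext_iff] <;> omega

theorem sortDesc_eq_of_forall_topSum_eq {x y : Fin n → ℝ} (h : ∀ k, topSum k x = topSum k y) :
    sortDesc x = sortDesc y := by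
  funext i
  have hx := topSum_succ x i
  have hy := topSum_succ y i
  linarith [h i, h (i + 1)]


noncomputable def topSet (k : ℕ) (x : Fin n → ℝ) : Finset (Fin n) :=
  ({j : Fin n | (j : ℕ) < k} : Finset (Fin n)).map (sortPerm x).toEmbedding

theorem mem_topSet {k : ℕ} {x : Fin n → ℝ} {i : Fin n} :
    i ∈ topSet k x ↔ ((sortPerm x).symm i : ℕ) < k := by
  simp [topSet, mem_map_equiv]

theorem card_topSet {k : ℕ} (hk : k ≤ n) (x : Fin n → ℝ) : #(topSet k x) = k := by
  simp [topSet, Fin.card_filter_val_lt, hk]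

theorem sum_topSet (k : ℕ) (x : Fin n → ℝ) : ∑ i ∈ topSet k x, x i = topSum k x := by
  simp [topSet, topSum, sum_filter, sortDesc_eq_comp]

theorem topSet_succ (x : Fin n → ℝ) (i : Fin n) :
    topSet (i + 1) x = insert (sortPerm x i) (topSet i x) := by
  ext j
  simp only [mem_insert, mem_topSet, ← Equiv.symm_apply_eq, Fin.ext_iff]
  omega

theorem sortPerm_apply_notMem_topSet (x : Fin n → ℝ) (i : Fin n) : sortPerm x i ∉ topSet i x := by
  simp [mem_topSet]

theorem eq_of_forall_sum_topSet_eq {x y y' : Fin n → ℝ}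
    (h : ∀ k ≤ n, ∑ i ∈ topSet k x, y i = ∑ i ∈ topSet k x, y' i) : y = y' := by
  funext i
  obtain ⟨j, rfl⟩ := (sortPerm x).surjective i
  have hsucc := h (j + 1) j.2
  rw [topSet_succ, sum_insert (sortPerm_apply_notMem_topSet x j),
    sum_insert (sortPerm_apply_notMem_topSet x j), h j j.2.le] at hsucc
  exact add_right_cancel hsucc

theorem apply_le_of_mem_topSet {k : ℕ} {x : Fin n → ℝ} {i j : Fin n} (hi : i ∈ topSet k x)
    (hj : j ∉ topSet k x) : x j ≤ x i := by
  rw [mem_topSet] at hi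
  rw [mem_topSet, not_lt] at hj
  rw [← sortDesc_sortPerm_symm_apply x i, ← sortDesc_sortPerm_symm_apply x j]
  exact antitone_sortDesc x (Fin.le_def.2 (by omega))

theorem apply_lt_of_mem_topSet {k : ℕ} {x : Fin n → ℝ}
    (hgap : ∀ i j : Fin n, (i : ℕ) < k → k ≤ (j : ℕ) → sortDesc x j < sortDesc x i) {i j : Fin n}
    (hi : i ∈ topSet k x) (hj : j ∉ topSet k x) : x j < x i := by
  rw [mem_topSet] at hi
  rw [mem_topSet, not_lt] at hj
  rw [← sortDesc_sortPerm_symm_apply x i, ← sortDesc_sortPerm_symm_apply x j]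
  exact hgap _ _ hi hj

theorem sum_le_topSum (x : Fin n → ℝ) (A : Finset (Fin n)) : ∑ i ∈ A, x i ≤ topSum #A x := by
  have hA : #A ≤ n := by simpa using card_le_univ A
  rw [← sum_topSet]
  exact sum_le_sum_of_card_eq_of_forall_le (card_topSet hA x).symm
    fun i hi j hj => apply_le_of_mem_topSet hi hj

theorem apply_le_apply_of_topSum_le_sum {x : Fin n → ℝ} {A : Finset (Fin n)}
    (hA : topSum #A x ≤ ∑ i ∈ A, x i) {i j : Fin n} (hi : i ∉ A) (hj : j ∈ A) : x i ≤ x j := by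
  have hi' : i ∉ A.erase j := fun h => hi (mem_of_mem_erase h)
  have hswap := sum_le_topSum x (insert i (A.erase j))
  rw [card_insert_of_notMem hi', card_erase_add_one hj, sum_insert hi', sum_erase_eq_sub hj]
    at hswap
  linarith

theorem subset_of_topSum_le_sum {x : Fin n → ℝ} {A T : Finset (Fin n)}
    (hT : ∀ i ∈ T, ∀ j ∉ T, x j < x i) (hA : topSum #A x ≤ ∑ i ∈ A, x i) :
    (#A ≤ #T → A ⊆ T) ∧ (#T ≤ #A → T ⊆ A) := by
  have hcomparable : A ⊆ T ∨ T ⊆ A := by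
    by_contra! h
    obtain ⟨j, hjA, hjT⟩ := not_subset.1 h.1
    obtain ⟨i, hiT, hiA⟩ := not_subset.1 h.2
    exact (hT i hiT j hjT).not_ge (apply_le_apply_of_topSum_le_sum hA hiA hjA)
  refine ⟨fun hc => ?_, fun hc => ?_⟩ <;> rcases hcomparable with h | h
  exacts [h, (eq_of_subset_of_card_le h hc).ge, (eq_of_subset_of_card_le h hc).ge, h]

theorem MajorizedBy.topSum_le {x d : Fin n → ℝ} (h : MajorizedBy x d) (k : ℕ) :
    topSum k x ≤ topSum k d := by
  rcases le_or_gt k (n - 1) with hk | hk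
  · exact h.1 k hk
  · rw [topSum_of_le (by omega), topSum_of_le (by omega), h.2]

theorem majorizedBy_iff_forall_sum_le {x d : Fin n → ℝ} :
    MajorizedBy x d ↔ (∀ A : Finset (Fin n), ∑ i ∈ A, x i ≤ topSum #A d) ∧ ∑ i, x i = ∑ i, d i := by
  refine ⟨fun h => ⟨fun A => (sum_le_topSum x A).trans (h.topSum_le _), h.2⟩,
    fun h => ⟨fun k hk => ?_, h.2⟩⟩
  simpa [sum_topSet, card_topSet (show k ≤ n by omega)] using h.1 (topSet k x)

theorem majorizedBy_comp_perm_self (d : Fin n → ℝ) (σ : Equiv.Perm (Fin n)) :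
    MajorizedBy (d ∘ σ) d :=
  ⟨fun k _ => (topSum_comp_perm k d σ).le, Equiv.sum_comp σ d⟩

theorem sortDesc_lt_of_topSum_eq {x d : Fin n → ℝ} {r : ℕ} (hr : topSum r x = topSum r d)
    (hpos : topSum (r - 1) x + topSum (r + 1) x < topSum (r - 1) d + topSum (r + 1) d) :
    ∀ i j : Fin n, (i : ℕ) < r → r ≤ (j : ℕ) → sortDesc x j < sortDesc x i := by
  intro i j hi hj
  obtain ⟨s, rfl⟩ : ∃ s, r = s + 1 := ⟨r - 1, by omega⟩
  let t : Fin n := ⟨s, by omega⟩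
  let t' : Fin n := ⟨s + 1, by omega⟩
  have hx := topSum_succ x t
  have hx' := topSum_succ x t'
  have hd := topSum_succ d t
  have hd' := topSum_succ d t'
  have hdt : sortDesc d t' ≤ sortDesc d t := antitone_sortDesc d (Fin.le_def.2 (by simp [t, t']))
  simp only [t, t', Nat.add_sub_cancel] at hx hx' hd hd' hpos
  calc sortDesc x j ≤ sortDesc x t' := antitone_sortDesc x (Fin.le_def.2 hj)
    _ < sortDesc x t := by linarith
    _ ≤ sortDesc x i := antitone_sortDesc x (Fin.le_def.2 (by simp [t]; omega))

theorem MajorizedBy.subset_topSet_of_sum_eq {x d : Fin n → ℝ} (hxd : MajorizedBy x d) {r : ℕ}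
    (hrn : r ≤ n) (hr : topSum r x = topSum r d)
    (hpos : topSum (r - 1) x + topSum (r + 1) x < topSum (r - 1) d + topSum (r + 1) d)
    ⦃A : Finset (Fin n)⦄ (hA : ∑ i ∈ A, x i = topSum #A d) :
    (#A ≤ r → A ⊆ topSet r x) ∧ (r ≤ #A → topSet r x ⊆ A) := by
  simpa only [card_topSet hrn x] using subset_of_topSum_le_sum
    (fun i hi j hj => apply_lt_of_mem_topSet (sortDesc_lt_of_topSum_eq hr hpos) hi hj)
    (hA ▸ hxd.topSum_le _)

theorem notMem_extremePoints_of_sum_eq_zero {x d v : Fin n → ℝ} (hx : MajorizedBy x d)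
    (hv : v ≠ 0) (htight : ∀ A : Finset (Fin n), ∑ i ∈ A, x i = topSum #A d → ∑ i ∈ A, v i = 0) :
    x ∉ {y | MajorizedBy y d}.extremePoints ℝ := by
  rw [majorizedBy_iff_forall_sum_le] at hx
  refine notMem_extremePoints_of_eventually_add_smul_mem hv ?_
  have hv_sum : ∑ i, v i = 0 :=
    htight univ (by rw [card_univ, Fintype.card_fin, topSum_of_le le_rfl, hx.2])
  have hA : ∀ A : Finset (Fin n),
      ∀ᶠ t in 𝓝 (0 : ℝ), ∑ i ∈ A, x i + t * ∑ i ∈ A, v i ≤ topSum #A d := by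
    intro A
    rcases (hx.1 A).eq_or_lt with heq | hlt
    · simp [htight A heq, heq]
    · refine (ContinuousAt.eventually_lt (by fun_prop) continuousAt_const ?_).mono
        fun _ => le_of_lt
      simpa using hlt
  filter_upwards [eventually_all.2 hA] with t ht
  simp only [majorizedBy_iff_forall_sum_le, Pi.add_apply, Pi.smul_apply,
    smul_eq_mul, sum_add_distrib, ← mul_sum]
  exact ⟨ht, by rw [hv_sum, mul_zero, add_zero, hx.2]⟩

theorem sortDesc_eq_of_mem_extremePoints {x d : Fin n → ℝ}
    (hx : x ∈ {y | MajorizedBy y d}.extremePoints ℝ) : sortDesc x = sortDesc d := by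
  have hxd : MajorizedBy x d := hx.1
  by_contra hne
  obtain ⟨k, hk⟩ : ∃ k, topSum k x ≠ topSum k d := by
    contrapose! hne
    exact sortDesc_eq_of_forall_topSum_eq hne
  obtain ⟨a, b, hak, hkb, hbn, ha, hb, hab⟩ :=
    Nat.exists_maximal_interval_of_not (P := fun k => topSum k x = topSum k d) (by simp)
      (fun j hj => by rw [topSum_of_le hj, topSum_of_le hj, hxd.2]) hk
  have hlt : ∀ j, a < j → j < b → topSum j x < topSum j d :=
    fun j h₁ h₂ => (hxd.topSum_le j).lt_of_ne (hab j h₁ h₂)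
  have hsepa := hxd.subset_topSet_of_sum_eq (r := a) (by omega) ha
    (by linarith [hxd.topSum_le (a - 1), hlt (a + 1) (by omega) (by omega)])
  have hsepb := hxd.subset_topSet_of_sum_eq hbn hb
    (by linarith [hxd.topSum_le (b + 1), hlt (b - 1) (by omega) (by omega)])
  let p := sortPerm x ⟨a, by omega⟩
  let q := sortPerm x ⟨b - 1, by omega⟩
  have hp : p ∈ topSet b x ∧ p ∉ topSet a x := by simp [p, mem_topSet]; omega
  have hq : q ∈ topSet b x ∧ q ∉ topSet a x := by simp [q, mem_topSet]; omega
  have hpq : p ≠ q := fun h => by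
    have := congrArg (fun i => ((sortPerm x).symm i : ℕ)) h
    simp [p, q] at this
    omega
  refine notMem_extremePoints_of_sum_eq_zero hxd (v := Pi.single p 1 - Pi.single q 1) ?_ ?_ hx
  · intro h
    simpa [hpq] using congrFun h p
  · intro A hA
    have hAeq : topSum #A x = topSum #A d :=
      le_antisymm (hxd.topSum_le _) (hA ▸ sum_le_topSum x A)
    have hiff : p ∈ A ↔ q ∈ A := by
      rcases le_or_gt #A a with h | h
      · have hsub := (hsepa hA).1 h
        exact iff_of_false (fun h => hp.2 (hsub h)) (fun h => hq.2 (hsub h))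
      · have hsub := (hsepb hA).2 (by by_contra! h'; exact hab _ h h' hAeq)
        exact iff_of_true (hsub hp.1) (hsub hq.1)
    simp [sum_sub_distrib, sum_pi_single', hiff]

theorem comp_perm_mem_extremePoints (d : Fin n → ℝ) (σ : Equiv.Perm (Fin n)) :
    d ∘ σ ∈ {y | MajorizedBy y d}.extremePoints ℝ := by
  refine mem_extremePoints_of_forall_le (ι := Fin (n + 1))
    (fun k => ∑ i ∈ topSet k (d ∘ σ), LinearMap.proj i) (majorizedBy_comp_perm_self d σ) ?_ ?_
  · intro y hy k
    simp only [LinearMap.coe_sum, Finset.sum_apply, LinearMap.proj_apply]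
    calc ∑ i ∈ topSet k (d ∘ σ), y i ≤ topSum #(topSet k (d ∘ σ)) d :=
          (majorizedBy_iff_forall_sum_le.1 hy).1 _
      _ = ∑ i ∈ topSet k (d ∘ σ), (d ∘ σ) i := by
          rw [card_topSet (by omega), sum_topSet, topSum_comp_perm]
  · intro y hy
    exact eq_of_forall_sum_topSet_eq fun k hk => by simpa using hy ⟨k, by omega⟩

end Majorization

theorem stmt18 (n : ℕ) (d : Fin n → ℝ) :
    Set.extremePoints ℝ {x : Fin n → ℝ | MajorizedBy x d} =
      {x : Fin n → ℝ | ∃ σ : Equiv.Perm (Fin n), x = d ∘ σ} := by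
  ext x
  constructor
  · exact fun hx => exists_perm_of_sortDesc_eq (sortDesc_eq_of_mem_extremePoints hx)
  · rintro ⟨σ, rfl⟩
    exact comp_perm_mem_extremePoints d σ
end
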